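/- arXiv:2405.01106 — 4 statements merged into one kernel-verified Lean document; each statement's English description precedes it below -/
import Mathlib

section
/- Let a, b > 0 be real numbers with a/b irrational, and define H : ℝ⁴ → ℝ by H(x) = (x₁² + x₂²)/a + (x₃² + x₄²)/b. Then for every s > 0, the level set H⁻¹(s) contains exactly two closed orbits of X_H: namely, the set of closed orbits contained in H⁻¹(s) is exactly { {x : x₃ = x₄ = 0 and x₁² + x₂² = a·s}, {x : x₁ = x₂ = 0 and x₃² + x₄² = b·s} }. -/
/-!
`H` is the sum of two decoupled harmonic oscillators, so its flow rotates the
`(x₁, x₂)`-plane with angular velocity `2 / a` and the `(x₃, x₄)`-plane with angular velocity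
`2 / b`; since the Hamiltonian vector field is linear, every trajectory is such a rotation.
A trajectory of period `T` moving in both planes would need `T ∈ πaℤ ∩ πbℤ`, forcing
`a / b ∈ ℚ`. Hence a closed orbit lies in one coordinate plane, where it is a full round circle
whose radius is fixed by the energy level.
-/

open Set

/-- The Hamiltonian vector field of `H : ℝ⁴ → ℝ` for the standard symplectic form
`dx₁∧dx₂ + dx₃∧dx₄`: `X_H(x) = (∂₂H, −∂₁H, ∂₄H, −∂₃H)`. -/
noncomputable def hamVF (H : (Fin 4 → ℝ) → ℝ) (x : Fin 4 → ℝ) : Fin 4 → ℝ :=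
  ![fderiv ℝ H x (Pi.single (1 : Fin 4) (1 : ℝ)),
    -fderiv ℝ H x (Pi.single (0 : Fin 4) (1 : ℝ)),
    fderiv ℝ H x (Pi.single (3 : Fin 4) (1 : ℝ)),
    -fderiv ℝ H x (Pi.single (2 : Fin 4) (1 : ℝ))]

/-- A trajectory of the Hamiltonian flow of `H`. -/
def IsTrajectory (H : (Fin 4 → ℝ) → ℝ) (γ : ℝ → Fin 4 → ℝ) : Prop :=
  ∀ t : ℝ, HasDerivAt γ (hamVF H (γ t)) t

/-- A closed orbit: the image of a nonconstant periodic trajectory. -/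
def IsClosedOrbit (H : (Fin 4 → ℝ) → ℝ) (Γ : Set (Fin 4 → ℝ)) : Prop :=
  ∃ γ : ℝ → Fin 4 → ℝ, IsTrajectory H γ ∧ (∃ T > (0 : ℝ), ∀ t, γ (t + T) = γ t) ∧
    (∃ t, γ t ≠ γ 0) ∧ Γ = Set.range γ

open Real

theorem hasDerivAt_rotation (p q ω t : ℝ) :
    HasDerivAt (fun t => p * cos (ω * t) + q * sin (ω * t))
      (ω * (q * cos (ω * t) - p * sin (ω * t))) t ∧
    HasDerivAt (fun t => q * cos (ω * t) - p * sin (ω * t))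
      (-(ω * (p * cos (ω * t) + q * sin (ω * t)))) t := by
  have hω : HasDerivAt (fun t => ω * t) ω t := by simpa using (hasDerivAt_id' t).const_mul ω
  exact ⟨((hω.cos.const_mul p).fun_add (hω.sin.const_mul q)).congr_deriv (by ring),
    ((hω.cos.const_mul q).fun_sub (hω.sin.const_mul p)).congr_deriv (by ring)⟩

theorem exists_rotation_eq_iff (p q u v : ℝ) :
    (∃ θ, p * cos θ + q * sin θ = u ∧ q * cos θ - p * sin θ = v) ↔
      u ^ 2 + v ^ 2 = p ^ 2 + q ^ 2 := by
  constructor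
  · rintro ⟨θ, rfl, rfl⟩
    linear_combination (p ^ 2 + q ^ 2) * sin_sq_add_cos_sq θ
  · intro h
    set z : ℂ := ⟨p, q⟩
    set w : ℂ := ⟨u, v⟩
    have hzw : ‖w‖ = ‖z‖ := by
      simp only [Complex.norm_def, Complex.normSq_mk, z, w]
      congr 1
      linear_combination h
    have hp : ‖z‖ * cos z.arg = p := Complex.norm_mul_cos_arg z
    have hq : ‖z‖ * sin z.arg = q := Complex.norm_mul_sin_arg z
    have hu : ‖z‖ * cos w.arg = u := hzw ▸ Complex.norm_mul_cos_arg w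
    have hv : ‖z‖ * sin w.arg = v := hzw ▸ Complex.norm_mul_sin_arg w
    refine ⟨z.arg - w.arg, ?_, ?_⟩ <;> rw [cos_sub, sin_sub]
    · linear_combination (-(cos z.arg * cos w.arg + sin z.arg * sin w.arg)) * hp
        - (sin z.arg * cos w.arg - cos z.arg * sin w.arg) * hq + hu
        + ‖z‖ * cos w.arg * sin_sq_add_cos_sq z.arg
    · linear_combination (sin z.arg * cos w.arg - cos z.arg * sin w.arg) * hp
        - (cos z.arg * cos w.arg + sin z.arg * sin w.arg) * hq + hv
        + ‖z‖ * sin w.arg * sin_sq_add_cos_sq z.arg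

theorem cos_eq_one_of_rotation_eq_self {p q θ : ℝ} (h₁ : p * cos θ + q * sin θ = p)
    (h₂ : q * cos θ - p * sin θ = q) (hpq : p ≠ 0 ∨ q ≠ 0) : cos θ = 1 := by
  have hne : p ^ 2 + q ^ 2 ≠ 0 := by rcases hpq with h | h <;> positivity
  have : (p ^ 2 + q ^ 2) * (cos θ - 1) = 0 := by linear_combination p * h₁ + q * h₂
  exact sub_eq_zero.1 ((mul_eq_zero.1 this).resolve_left hne)

theorem not_irrational_div_of_cos_eq_one {a b T : ℝ} (hT : T ≠ 0) (ha : cos (T / a) = 1)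
    (hb : cos (T / b) = 1) : ¬Irrational (a / b) := by
  obtain ⟨m, hm⟩ := (cos_eq_one_iff _).1 ha
  obtain ⟨n, hn⟩ := (cos_eq_one_iff _).1 hb
  rcases eq_or_ne a 0 with rfl | ha0
  · simp
  rcases eq_or_ne b 0 with rfl | hb0
  · simp
  have hm0 : (m : ℝ) ≠ 0 := by
    rintro h0
    rw [h0, zero_mul, eq_comm, div_eq_zero_iff] at hm
    tauto
  rw [eq_div_iff ha0] at hm
  rw [eq_div_iff hb0] at hn
  have hπ : 2 * π ≠ 0 := by positivity
  intro h
  apply h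
  refine ⟨n / m, ?_⟩
  push_cast
  rw [div_eq_div_iff hm0 hb0]
  apply mul_left_cancel₀ hπ
  linear_combination hn - hm

noncomputable def ellipsoidHamiltonian (a b : ℝ) (x : Fin 4 → ℝ) : ℝ :=
  ((x 0) ^ 2 + (x 1) ^ 2) / a + ((x 2) ^ 2 + (x 3) ^ 2) / b

theorem hamVF_ellipsoidHamiltonian (a b : ℝ) (x : Fin 4 → ℝ) :
    hamVF (ellipsoidHamiltonian a b) x =
      ![2 / a * x 1, -(2 / a * x 0), 2 / b * x 3, -(2 / b * x 2)] := by
  have hsq (i : Fin 4) := (hasFDerivAt_apply (𝕜 := ℝ) i x).pow 2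
  have hH := (((hsq 0).fun_add (hsq 1)).mul_const a⁻¹).fun_add
    (((hsq 2).fun_add (hsq 3)).mul_const b⁻¹)
  simp only [← div_eq_mul_inv] at hH
  unfold ellipsoidHamiltonian
  rw [hamVF, hH.fderiv]
  simp [inv_mul_eq_div, div_mul_eq_mul_div]

noncomputable def ellipsoidFlow (a b t : ℝ) (x : Fin 4 → ℝ) : Fin 4 → ℝ :=
  ![x 0 * cos (2 / a * t) + x 1 * sin (2 / a * t), x 1 * cos (2 / a * t) - x 0 * sin (2 / a * t),
    x 2 * cos (2 / b * t) + x 3 * sin (2 / b * t), x 3 * cos (2 / b * t) - x 2 * sin (2 / b * t)]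

theorem isTrajectory_ellipsoidFlow (a b : ℝ) (x : Fin 4 → ℝ) :
    IsTrajectory (ellipsoidHamiltonian a b) (fun t => ellipsoidFlow a b t x) := by
  intro t
  rw [hamVF_ellipsoidHamiltonian, hasDerivAt_pi]
  intro i
  fin_cases i
  exacts [(hasDerivAt_rotation _ _ _ t).1, (hasDerivAt_rotation _ _ _ t).2,
    (hasDerivAt_rotation _ _ _ t).1, (hasDerivAt_rotation _ _ _ t).2]

theorem lipschitzWith_hamVF_ellipsoidHamiltonian (a b : ℝ) :
    ∃ K, LipschitzWith K (hamVF (ellipsoidHamiltonian a b)) := by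
  let L : (Fin 4 → ℝ) →ₗ[ℝ] (Fin 4 → ℝ) :=
    { toFun := hamVF (ellipsoidHamiltonian a b)
      map_add' := fun x y => by
        simp only [hamVF_ellipsoidHamiltonian, Matrix.cons_add_cons, Matrix.empty_add_empty,
          Pi.add_apply]
        ring_nf
      map_smul' := fun c x => by
        simp only [hamVF_ellipsoidHamiltonian, Matrix.smul_cons, Matrix.smul_empty, Pi.smul_apply,
          smul_eq_mul, RingHom.id_apply]
        ring_nf }
  exact ⟨_, (LinearMap.toContinuousLinearMap L).lipschitz⟩

theorem ellipsoidFlow_zero (a b : ℝ) (x : Fin 4 → ℝ) : ellipsoidFlow a b 0 x = x := by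
  ext i; fin_cases i <;> simp [ellipsoidFlow]

theorem IsTrajectory.eq_ellipsoidFlow {a b : ℝ} {γ : ℝ → Fin 4 → ℝ}
    (hγ : IsTrajectory (ellipsoidHamiltonian a b) γ) : γ = fun t => ellipsoidFlow a b t (γ 0) := by
  obtain ⟨K, hK⟩ := lipschitzWith_hamVF_ellipsoidHamiltonian a b
  exact ODE_solution_unique_univ (v := fun _ => hamVF _) (s := fun _ => univ) (t₀ := 0)
    (fun _ => hK.lipschitzOnWith) (fun t => ⟨hγ t, trivial⟩)
    (fun t => ⟨isTrajectory_ellipsoidFlow a b (γ 0) t, trivial⟩) (ellipsoidFlow_zero a b _).symm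

def circle₁₂ (c : ℝ) : Set (Fin 4 → ℝ) := {x | x 2 = 0 ∧ x 3 = 0 ∧ x 0 ^ 2 + x 1 ^ 2 = c}

def circle₃₄ (c : ℝ) : Set (Fin 4 → ℝ) := {x | x 0 = 0 ∧ x 1 = 0 ∧ x 2 ^ 2 + x 3 ^ 2 = c}

theorem mem_circle₁₂_iff {a s : ℝ} (b : ℝ) (ha : a ≠ 0) {x : Fin 4 → ℝ} :
    x ∈ circle₁₂ (a * s) ↔ x 2 = 0 ∧ x 3 = 0 ∧ ellipsoidHamiltonian a b x = s := by
  simp only [circle₁₂, ellipsoidHamiltonian, mem_ofPred_eq, and_congr_right_iff]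
  intro h2 h3
  simp [h2, h3, div_eq_iff ha, mul_comm]

theorem mem_circle₃₄_iff {b s : ℝ} (a : ℝ) (hb : b ≠ 0) {x : Fin 4 → ℝ} :
    x ∈ circle₃₄ (b * s) ↔ x 0 = 0 ∧ x 1 = 0 ∧ ellipsoidHamiltonian a b x = s := by
  simp only [circle₃₄, ellipsoidHamiltonian, mem_ofPred_eq, and_congr_right_iff]
  intro h0 h1
  simp [h0, h1, div_eq_iff hb, mul_comm]

theorem range_ellipsoidFlow_of_mem_circle₁₂ {a c : ℝ} (b : ℝ) (ha : a ≠ 0) {x : Fin 4 → ℝ}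
    (hx : x ∈ circle₁₂ c) : range (fun t => ellipsoidFlow a b t x) = circle₁₂ c := by
  obtain ⟨h2, h3, rfl⟩ := hx
  ext y
  simp only [mem_range, circle₁₂, mem_ofPred_eq, ← exists_rotation_eq_iff]
  constructor
  · rintro ⟨t, rfl⟩
    exact ⟨by simp [ellipsoidFlow, h2, h3], by simp [ellipsoidFlow, h2, h3], 2 / a * t, rfl, rfl⟩
  · rintro ⟨hy2, hy3, θ, hy0, hy1⟩
    refine ⟨θ / (2 / a), ?_⟩
    have hθ : 2 / a * (θ / (2 / a)) = θ := mul_div_cancel₀ θ (by simp [ha])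
    ext i
    fin_cases i <;> simp [ellipsoidFlow, hθ, h2, h3, hy0, hy1, hy2, hy3]

theorem range_ellipsoidFlow_of_mem_circle₃₄ {b c : ℝ} (a : ℝ) (hb : b ≠ 0) {x : Fin 4 → ℝ}
    (hx : x ∈ circle₃₄ c) : range (fun t => ellipsoidFlow a b t x) = circle₃₄ c := by
  obtain ⟨h0, h1, rfl⟩ := hx
  ext y
  simp only [mem_range, circle₃₄, mem_ofPred_eq, ← exists_rotation_eq_iff]
  constructor
  · rintro ⟨t, rfl⟩
    exact ⟨by simp [ellipsoidFlow, h0, h1], by simp [ellipsoidFlow, h0, h1], 2 / b * t, rfl, rfl⟩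
  · rintro ⟨hy0, hy1, θ, hy2, hy3⟩
    refine ⟨θ / (2 / b), ?_⟩
    have hθ : 2 / b * (θ / (2 / b)) = θ := mul_div_cancel₀ θ (by simp [hb])
    ext i
    fin_cases i <;> simp [ellipsoidFlow, hθ, h0, h1, hy0, hy1, hy2, hy3]

theorem isClosedOrbit_circle₁₂ {a c : ℝ} (b : ℝ) (ha : 0 < a) (hc : 0 < c) :
    IsClosedOrbit (ellipsoidHamiltonian a b) (circle₁₂ c) := by
  let x : Fin 4 → ℝ := ![√c, 0, 0, 0]
  have hx : x ∈ circle₁₂ c := by simp [circle₁₂, x, sq_sqrt hc.le]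
  have hperiod (t : ℝ) : 2 / a * (t + π * a) = 2 / a * t + 2 * π := by field_simp
  have hhalf : 2 / a * (π * a / 2) = π := by field_simp
  refine ⟨fun t => ellipsoidFlow a b t x, isTrajectory_ellipsoidFlow a b x,
    ⟨π * a, by positivity, fun t => ?_⟩, ⟨π * a / 2, fun h => ?_⟩,
    (range_ellipsoidFlow_of_mem_circle₁₂ b ha.ne' hx).symm⟩
  · ext i
    fin_cases i <;> simp [ellipsoidFlow, x, hperiod]
  · have h0 := congrFun h 0
    simp [ellipsoidFlow, x, hhalf] at h0
    linarith [sqrt_pos.2 hc]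

theorem isClosedOrbit_circle₃₄ {b c : ℝ} (a : ℝ) (hb : 0 < b) (hc : 0 < c) :
    IsClosedOrbit (ellipsoidHamiltonian a b) (circle₃₄ c) := by
  let x : Fin 4 → ℝ := ![0, 0, √c, 0]
  have hx : x ∈ circle₃₄ c := by simp [circle₃₄, x, sq_sqrt hc.le]
  have hperiod (t : ℝ) : 2 / b * (t + π * b) = 2 / b * t + 2 * π := by field_simp
  have hhalf : 2 / b * (π * b / 2) = π := by field_simp
  refine ⟨fun t => ellipsoidFlow a b t x, isTrajectory_ellipsoidFlow a b x,
    ⟨π * b, by positivity, fun t => ?_⟩, ⟨π * b / 2, fun h => ?_⟩,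
    (range_ellipsoidFlow_of_mem_circle₃₄ a hb.ne' hx).symm⟩
  · ext i
    fin_cases i <;> simp [ellipsoidFlow, x, hperiod]
  · have h2 := congrFun h 2
    simp [ellipsoidFlow, x, hhalf] at h2
    linarith [sqrt_pos.2 hc]

theorem eq_zero_or_eq_zero_of_ellipsoidFlow_eq_self {a b T : ℝ} {x : Fin 4 → ℝ}
    (hab : Irrational (a / b)) (hT : T ≠ 0) (h : ellipsoidFlow a b T x = x) :
    (x 2 = 0 ∧ x 3 = 0) ∨ (x 0 = 0 ∧ x 1 = 0) := by
  by_contra hx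
  simp only [not_or, not_and_or] at hx
  have h₁ := cos_eq_one_of_rotation_eq_self (congrFun h 0) (congrFun h 1) hx.2
  have h₂ := cos_eq_one_of_rotation_eq_self (congrFun h 2) (congrFun h 3) hx.1
  rw [div_mul_eq_mul_div] at h₁ h₂
  exact not_irrational_div_of_cos_eq_one (mul_ne_zero two_ne_zero hT) h₁ h₂ hab

theorem ellipsoid_exactly_two_closed_orbits
    (a b : ℝ) (ha : 0 < a) (hb : 0 < b) (hab : Irrational (a / b))
    (H : (Fin 4 → ℝ) → ℝ)
    (hHdef : ∀ x : Fin 4 → ℝ,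
      H x = ((x 0) ^ 2 + (x 1) ^ 2) / a + ((x 2) ^ 2 + (x 3) ^ 2) / b) :
    ∀ s : ℝ, 0 < s →
      {Γ : Set (Fin 4 → ℝ) | IsClosedOrbit H Γ ∧ Γ ⊆ H ⁻¹' {s}} =
        {{x : Fin 4 → ℝ | x 2 = 0 ∧ x 3 = 0 ∧ (x 0) ^ 2 + (x 1) ^ 2 = a * s},
         {x : Fin 4 → ℝ | x 0 = 0 ∧ x 1 = 0 ∧ (x 2) ^ 2 + (x 3) ^ 2 = b * s}} := by
  obtain rfl : H = ellipsoidHamiltonian a b := funext hHdef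
  intro s hs
  ext Γ
  simp only [mem_ofPred_eq, mem_insert_iff, mem_singleton_iff]
  constructor
  · rintro ⟨⟨γ, hγ, ⟨T, hT, hper⟩, -, rfl⟩, hlevel⟩
    have hγ₀ : ellipsoidHamiltonian a b (γ 0) = s := hlevel (mem_range_self 0)
    have hflow := hγ.eq_ellipsoidFlow
    have hfix : ellipsoidFlow a b T (γ 0) = γ 0 := by
      rw [← congrFun hflow T]
      simpa using hper 0
    rw [hflow]
    rcases eq_zero_or_eq_zero_of_ellipsoidFlow_eq_self hab hT.ne' hfix with ⟨h2, h3⟩ | ⟨h0, h1⟩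
    · exact .inl <| range_ellipsoidFlow_of_mem_circle₁₂ b ha.ne' <|
        (mem_circle₁₂_iff b ha.ne').2 ⟨h2, h3, hγ₀⟩
    · exact .inr <| range_ellipsoidFlow_of_mem_circle₃₄ a hb.ne' <|
        (mem_circle₃₄_iff a hb.ne').2 ⟨h0, h1, hγ₀⟩
  · rintro (rfl | rfl)
    · exact ⟨isClosedOrbit_circle₁₂ b ha (by positivity),
        fun x hx => ((mem_circle₁₂_iff b ha.ne').1 hx).2.2⟩
    · exact ⟨isClosedOrbit_circle₃₄ a hb (by positivity),
        fun x hx => ((mem_circle₃₄_iff a hb.ne').1 hx).2.2⟩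
end

section
/- Let Z be a nonempty compact metric space and let K(Z) denote the space of nonempty compact subsets of Z equipped with the Hausdorff metric. Let (𝒵ₖ)ₖ be a sequence of connected subsets of K(Z), and assume there exist Λₖ ∈ 𝒵ₖ for each k such that the sequence (Λₖ) converges in K(Z). Let 𝒵 ⊆ K(Z) be the set of all subsequential limit points of the sequence (𝒵ₖ), i.e. 𝒵 = { W : there exist a strictly increasing function j ↦ kⱼ and elements Wⱼ ∈ 𝒵_{kⱼ} with Wⱼ → W in the Hausdorff metric }. Then 𝒵 is closed and connected. -/
/-!
Statement 7: The set of subsequential Hausdorff limit points of a sequence of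
connected subsets of `K(Z)` (nonempty compact subsets of a compact metric space `Z`
with the Hausdorff metric) is closed and connected, provided some sequence of
elements `Λₖ ∈ 𝒵ₖ` converges.
-/

open TopologicalSpace Filter

/-- The set of subsequential limit points of the sequence of subsets `𝒵ₖ` of the
space of nonempty compact subsets of `Z` with the Hausdorff metric. -/
def subseqLimitSet {Z : Type*} [MetricSpace Z]
    (𝒵 : ℕ → Set (NonemptyCompacts Z)) : Set (NonemptyCompacts Z) :=
  {W | ∃ φ : ℕ → ℕ, StrictMono φ ∧ ∃ Wseq : ℕ → NonemptyCompacts Z,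
    (∀ j, Wseq j ∈ 𝒵 (φ j)) ∧ Tendsto Wseq atTop (nhds W)}

open Metric in
/-- The subsequential limit set coincides with the topological `limsup`
`⋂ n, closure (⋃ k ≥ n, A k)`. -/
private lemma limset_eq {X : Type*} [MetricSpace X] (A : ℕ → Set X) :
    {W : X | ∃ φ : ℕ → ℕ, StrictMono φ ∧ ∃ Wseq : ℕ → X,
      (∀ j, Wseq j ∈ A (φ j)) ∧ Tendsto Wseq atTop (nhds W)} =
    ⋂ n : ℕ, closure (⋃ k ∈ Set.Ici n, A k) := by
  ext W
  constructor
  · rintro ⟨φ, hφ, Wseq, hmem, hW⟩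
    refine Set.mem_iInter.2 fun n => mem_closure_of_tendsto hW ?_
    filter_upwards [eventually_ge_atTop n] with j hj
    exact Set.mem_biUnion (le_trans hj (hφ.id_le j)) (hmem j)
  · intro hW
    have freq : ∀ n : ℕ, ∃ᶠ k in atTop, ∃ w ∈ A k, dist w W < 1/(n+1) := by
      intro n
      rw [frequently_atTop]
      intro m
      have h1 : W ∈ closure (⋃ k ∈ Set.Ici m, A k) := Set.mem_iInter.1 hW m
      have hpos : (0:ℝ) < 1/(n+1) := by positivity
      obtain ⟨w, hw, hd⟩ := Metric.mem_closure_iff.1 h1 _ hpos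
      obtain ⟨k, hk, hwk⟩ := Set.mem_iUnion₂.1 hw
      exact ⟨k, hk, w, hwk, by rwa [dist_comm]⟩
    obtain ⟨φ, hφ, hP⟩ := Filter.extraction_forall_of_frequently freq
    choose Wseq hmem hd using hP
    refine ⟨φ, hφ, Wseq, hmem, tendsto_iff_dist_tendsto_zero.2 ?_⟩
    refine squeeze_zero (fun n => dist_nonneg) (fun n => (hd n).le) ?_
    exact tendsto_one_div_add_atTop_nhds_zero_nat

open Metric in
/-- In a compact metric space, the sets `A k` are eventually contained in any
`ε`-thickening of the subsequential limit set. -/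
private lemma limset_thickening {X : Type*} [MetricSpace X] [CompactSpace X]
    (A : ℕ → Set X) {ε : ℝ} (hε : 0 < ε) :
    ∀ᶠ k in atTop, A k ⊆ thickening ε {W : X | ∃ φ : ℕ → ℕ, StrictMono φ ∧
      ∃ Wseq : ℕ → X, (∀ j, Wseq j ∈ A (φ j)) ∧ Tendsto Wseq atTop (nhds W)} := by
  set S := {W : X | ∃ φ : ℕ → ℕ, StrictMono φ ∧
      ∃ Wseq : ℕ → X, (∀ j, Wseq j ∈ A (φ j)) ∧ Tendsto Wseq atTop (nhds W)} with hS
  by_contra h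
  rw [Filter.not_eventually] at h
  have h' : ∃ᶠ k in atTop, ∃ w ∈ A k, w ∉ thickening ε S :=
    h.mono fun k hk => Set.not_subset.1 hk
  obtain ⟨φ, hφ, hw⟩ := Filter.extraction_of_frequently_atTop h'
  choose w hwmem hwnot using hw
  obtain ⟨W, -, ψ, hψ, hWlim⟩ :=
    isCompact_univ.tendsto_subseq (x := w) (fun j => Set.mem_univ (w j))
  have hWS : W ∈ S :=
    ⟨φ ∘ ψ, hφ.comp hψ, fun j => w (ψ j), fun j => hwmem (ψ j), hWlim⟩
  have hev : ∀ᶠ j in atTop, dist (w (ψ j)) W < ε :=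
    hWlim (Metric.ball_mem_nhds W hε)
  obtain ⟨j, hj⟩ := hev.exists
  exact hwnot (ψ j) (Metric.mem_thickening_iff.2 ⟨W, hWS, hj⟩)

open Metric in
theorem subseq_limit_set_closed_and_connected
    (Z : Type*) [MetricSpace Z] [CompactSpace Z] [Nonempty Z]
    (𝒵 : ℕ → Set (NonemptyCompacts Z)) (hconn : ∀ k, IsConnected (𝒵 k))
    (Λ : ℕ → NonemptyCompacts Z) (hΛ : ∀ k, Λ k ∈ 𝒵 k)
    (L : NonemptyCompacts Z) (hL : Tendsto Λ atTop (nhds L)) :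
    IsClosed (subseqLimitSet 𝒵) ∧ IsConnected (subseqLimitSet 𝒵) := by
  
  have heq : subseqLimitSet 𝒵 = ⋂ n : ℕ, closure (⋃ k ∈ Set.Ici n, 𝒵 k) :=
    limset_eq 𝒵
  have hclosed : IsClosed (subseqLimitSet 𝒵) := by
    rw [heq]; exact isClosed_iInter fun n => isClosed_closure
  have hLS : L ∈ subseqLimitSet 𝒵 := ⟨id, strictMono_id, Λ, hΛ, hL⟩
  -- key separation lemma
  have key : ∀ F G : Set (NonemptyCompacts Z), IsCompact F → IsCompact G → Disjoint F G →
      subseqLimitSet 𝒵 ⊆ F ∪ G → L ∈ F → ∀ g ∈ G, g ∉ subseqLimitSet 𝒵 := by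
    intro F G hF hG hdis hcov hLF g hgG hgS
    obtain ⟨δ, hδ, hdisj2⟩ := hdis.exists_thickenings hF hG.isClosed
    have hev1 : ∀ᶠ k in atTop, 𝒵 k ⊆ thickening δ (subseqLimitSet 𝒵) :=
      limset_thickening 𝒵 hδ
    have hsub : thickening δ (subseqLimitSet 𝒵) ⊆
        thickening δ F ∪ thickening δ G := by
      rw [← thickening_union]
      exact thickening_subset_of_subset δ hcov
    have hev2 : ∀ᶠ k in atTop, Λ k ∈ thickening δ F :=
      hL (isOpen_thickening.mem_nhds (self_subset_thickening hδ F hLF))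
    have hev : ∀ᶠ k in atTop, 𝒵 k ⊆ thickening δ F := by
      filter_upwards [hev1, hev2] with k h1 h2
      exact (hconn k).isPreconnected.subset_left_of_subset_union
        isOpen_thickening isOpen_thickening hdisj2 (h1.trans hsub)
        ⟨Λ k, hΛ k, h2⟩
    obtain ⟨N, hN⟩ := eventually_atTop.1 hev
    obtain ⟨φ, hφ, wseq, hwmem, hwlim⟩ := hgS
    have hg2 : ∀ᶠ j in atTop, wseq j ∈ thickening δ G :=
      hwlim (isOpen_thickening.mem_nhds (self_subset_thickening hδ G hgG))
    have hg1 : ∀ᶠ j in atTop, wseq j ∈ thickening δ F := by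
      filter_upwards [eventually_ge_atTop N] with j hj
      exact hN (φ j) (hj.trans (hφ.id_le j)) (hwmem j)
    obtain ⟨j, h1, h2⟩ := (hg1.and hg2).exists
    exact Set.disjoint_left.1 hdisj2 h1 h2
  refine ⟨hclosed, ⟨L, hLS⟩, ?_⟩
  rw [isPreconnected_iff_subset_of_fully_disjoint_closed hclosed]
  intro u v hu hv hcov hdisj
  set F := u ∩ subseqLimitSet 𝒵 with hFdef
  set G := v ∩ subseqLimitSet 𝒵 with hGdef
  have hF : IsCompact F := (hu.inter hclosed).isCompact
  have hG : IsCompact G := (hv.inter hclosed).isCompact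
  have hFG : Disjoint F G :=
    hdisj.mono Set.inter_subset_left Set.inter_subset_left
  have hcov' : subseqLimitSet 𝒵 ⊆ F ∪ G := fun x hx =>
    (hcov hx).elim (fun h => Or.inl ⟨h, hx⟩) (fun h => Or.inr ⟨h, hx⟩)
  rcases hcov hLS with hLu | hLv
  · left
    intro x hx
    rcases hcov' hx with hxF | hxG
    · exact hxF.1
    · exact absurd hx (key F G hF hG hFG hcov' ⟨hLu, hLS⟩ x hxG)
  · right
    intro x hx
    rcases hcov' hx with hxF | hxG
    · exact absurd hx
        (key G F hG hF hFG.symm (by rwa [Set.union_comm] at hcov') ⟨hLv, hLS⟩ x hxF)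
    · exact hxG.1
end

section
/- Let Y be a compact metric space equipped with a continuous flow φ : ℝ × Y → Y, and equip (−1,1) × Y with the product metric. Suppose Ξ ⊆ (−1,1) × Y is a nonempty closed subset that is a δ-almost cylinder with respect to φ for every δ > 0. Then Ξ = Ioo (−1) 1 ×ˢ Λ, where Λ ⊆ Y is a nonempty compact subset invariant under the flow, i.e. φ(τ, y) ∈ Λ for every y ∈ Λ and every τ ∈ ℝ. -/
/-!
Statement 11: A nonempty closed subset of `(−1,1) × Y` that is a `δ`-almost cylinder
for every `δ > 0` is a cylinder `(−1,1) × Λ` over a nonempty compact flow-invariant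
set `Λ ⊆ Y`.

The space `(−1,1) × Y` is formalized as `↥(Set.Ioo (-1 : ℝ) 1) × Y` with the product
(max) metric; there the cylinder `Ioo (−1) 1 ×ˢ Λ` is `Set.univ ×ˢ Λ`.
-/

/-- A continuous flow on `Y`. -/
def IsFlow {Y : Type*} [TopologicalSpace Y] (φ : ℝ → Y → Y) : Prop :=
  Continuous (fun p : ℝ × Y => φ p.1 p.2) ∧ (∀ y, φ 0 y = y) ∧
    ∀ s t : ℝ, ∀ y, φ (s + t) y = φ s (φ t y)

/-- `Ξ ⊆ (−1,1) × Y` is a `δ`-almost cylinder with respect to the flow `φ`: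
it is nonempty, closed, and for every `(t,y) ∈ Ξ` and every `τ ∈ (−1,1)`, both
`(τ, y)` and `(t, φ(τ, y))` are within distance `δ` of `Ξ`. -/
def IsAlmostCylinder {Y : Type*} [MetricSpace Y] (φ : ℝ → Y → Y) (δ : ℝ)
    (Ξ : Set (↥(Set.Ioo (-1 : ℝ) 1) × Y)) : Prop :=
  Ξ.Nonempty ∧ IsClosed Ξ ∧
    ∀ p ∈ Ξ, ∀ τ : ↥(Set.Ioo (-1 : ℝ) 1),
      Metric.infDist (τ, p.2) Ξ ≤ δ ∧ Metric.infDist (p.1, φ (τ : ℝ) p.2) Ξ ≤ δ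

/-!
Since `Ξ` is closed and nonempty, a point at distance `≤ δ` from `Ξ` for every `δ > 0` lies in
`Ξ`; so `Ξ` is exactly invariant under both moves `(t, y) ↦ (τ, y)` and
`(t, y) ↦ (t, φ(τ, y))` with `|τ| < 1`. The first makes `Ξ` the cylinder over its projection
`Λ`, which is closed (a slice of `Ξ`) and hence compact; the second makes `Λ` invariant under
`φ(τ, ·)` for `|τ| < 1`, and the group law extends this to all `τ`, since
`φ(τ, ·) = φ(τ / n, ·)^[n]`.
-/

open Set

theorem IsClosed.mem_of_forall_infDist_le {α : Type*} [PseudoMetricSpace α] {s : Set α}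
    (hs : IsClosed s) (hne : s.Nonempty) {x : α} (h : ∀ δ > (0 : ℝ), Metric.infDist x s ≤ δ) :
    x ∈ s :=
  (hs.mem_iff_infDist_zero hne).2 <|
    le_antisymm (le_of_forall_pos_le_add fun δ hδ => by simpa using h δ hδ) Metric.infDist_nonneg

theorem eq_univ_prod_image_snd {X Y : Type*} {Ξ : Set (X × Y)}
    (h : ∀ p ∈ Ξ, ∀ t, (t, p.2) ∈ Ξ) : Ξ = univ ×ˢ (Prod.snd '' Ξ) := by
  ext ⟨t, y⟩
  simp only [mem_prod, mem_univ, true_and]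
  exact ⟨fun hp => ⟨(t, y), hp, rfl⟩, by rintro ⟨p, hp, rfl⟩; exact h p hp t⟩

theorem IsClosed.of_univ_prod {X Y : Type*} [TopologicalSpace X] [TopologicalSpace Y]
    [Nonempty X] {Λ : Set Y} (h : IsClosed (univ ×ˢ Λ : Set (X × Y))) : IsClosed Λ := by
  obtain ⟨x⟩ := ‹Nonempty X›
  simpa only [mk_preimage_prod_right (mem_univ x)] using h.preimage (Continuous.prodMk_right x)

theorem mapsTo_of_forall_abs_lt {Y : Type*} {φ : ℝ → Y → Y}
    (hadd : ∀ s t : ℝ, ∀ y, φ (s + t) y = φ s (φ t y)) {Λ : Set Y} {ε : ℝ} (hε : 0 < ε)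
    (h : ∀ σ : ℝ, |σ| < ε → MapsTo (φ σ) Λ Λ) (τ : ℝ) : MapsTo (φ τ) Λ Λ := by
  obtain ⟨n, hn⟩ := exists_nat_gt (|τ| / ε)
  have hn0 : (0 : ℝ) < n := (div_nonneg (abs_nonneg τ) hε.le).trans_lt hn
  have hstep : |τ / n| < ε := by
    rwa [abs_div, Nat.abs_cast, div_lt_iff₀ hn0, mul_comm, ← div_lt_iff₀ hε]
  have hiter : ∀ k : ℕ, MapsTo (φ (k * (τ / n))) Λ Λ := by
    intro k
    induction k with
    | zero => simpa using h 0 (by simpa using hε)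
    | succ k ih =>
      intro y hy
      rw [Nat.cast_succ, add_one_mul, add_comm, hadd]
      exact h _ hstep (ih hy)
  simpa [mul_div_cancel₀ τ hn0.ne'] using hiter n

theorem almost_cylinder_for_all_delta_is_invariant_cylinder
    (Y : Type*) [MetricSpace Y] [CompactSpace Y]
    (φ : ℝ → Y → Y) (hφ : IsFlow φ)
    (Ξ : Set (↥(Set.Ioo (-1 : ℝ) 1) × Y))
    (h : ∀ δ > (0 : ℝ), IsAlmostCylinder φ δ Ξ) :
    ∃ Λ : Set Y, Λ.Nonempty ∧ IsCompact Λ ∧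
      (∀ y ∈ Λ, ∀ τ : ℝ, φ τ y ∈ Λ) ∧
      Ξ = (Set.univ ×ˢ Λ : Set (↥(Set.Ioo (-1 : ℝ) 1) × Y)) := by
  obtain ⟨hne, hcl, -⟩ := h 1 one_pos
  have hmoves : ∀ p ∈ Ξ, ∀ τ : ↥(Ioo (-1 : ℝ) 1), (τ, p.2) ∈ Ξ ∧ (p.1, φ τ p.2) ∈ Ξ :=
    fun p hp τ => ⟨hcl.mem_of_forall_infDist_le hne fun δ hδ => ((h δ hδ).2.2 p hp τ).1,
      hcl.mem_of_forall_infDist_le hne fun δ hδ => ((h δ hδ).2.2 p hp τ).2⟩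
  have hcyl := eq_univ_prod_image_snd fun p hp τ => (hmoves p hp τ).1
  have hinv : ∀ τ : ℝ, MapsTo (φ τ) (Prod.snd '' Ξ) (Prod.snd '' Ξ) := by
    refine mapsTo_of_forall_abs_lt hφ.2.2 one_pos fun σ hσ => ?_
    rintro _ ⟨p, hp, rfl⟩
    exact ⟨_, (hmoves p hp ⟨σ, abs_lt.1 hσ⟩).2, rfl⟩
  have : Nonempty (Ioo (-1 : ℝ) 1) := nonempty_Ioo_subtype (by norm_num)
  refine ⟨_, hne.image _, (hcyl ▸ hcl).of_univ_prod.isCompact, fun y hy τ => hinv τ hy, hcyl⟩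
end

section
/- Let H : ℝ⁴ → ℝ be a smooth function and let I ⊆ ℛ_c(H) be an open interval. Then the set of s ∈ I such that H⁻¹(s) contains at most one closed orbit of X_H (i.e. any two closed orbits contained in H⁻¹(s) are equal as subsets of ℝ⁴) is a Lebesgue-measurable subset of ℝ. Equivalently, the set of s ∈ I such that H⁻¹(s) contains two distinct closed orbits is Lebesgue measurable (it is a countable union of compact sets intersected with I). -/
open Set MeasureTheory

/-- `ℛ_c(H)`: regular values with compact level set. -/
def Rc (H : (Fin 4 → ℝ) → ℝ) : Set ℝ :=
  {s | IsCompact (H ⁻¹' {s}) ∧ ∀ x ∈ H ⁻¹' {s}, fderiv ℝ H x ≠ 0}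

/-!
The levels carrying two distinct closed orbits form a σ-compact, hence Borel, set. Two distinct
closed orbits at a level are the ranges of periodic trajectories `γ`, `δ` with `γ 0 ∉ range δ`.
Bounding period, size, speed, nonconstancy and separation by `n` cuts the space of such data into
pieces that are compact by Arzelà–Ascoli: in the compact-open topology, being a trajectory is the
closed condition `γ t = γ 0 + ∫₀ᵗ V (γ u) du`. The level is a continuous function of the data.
-/

open Metric Function Filter
open scoped NNReal

theorem IsSigmaCompact.measurableSet {X : Type*} [TopologicalSpace X] [T2Space X]
    [MeasurableSpace X] [OpensMeasurableSpace X] {s : Set X} (hs : IsSigmaCompact s) :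
    MeasurableSet s := by
  obtain ⟨K, hK, rfl⟩ := hs
  exact .iUnion fun n => (hK n).isClosed.measurableSet

theorem ContinuousMap.isCompact_setOf_lipschitzWith_mapsTo {X Y : Type*} [PseudoEMetricSpace X]
    [EMetricSpace Y] (K : ℝ≥0) {s : Set Y} (hs : IsCompact s) :
    IsCompact {f : C(X, Y) | LipschitzWith K f ∧ ∀ x, f x ∈ s} := by
  apply ArzelaAscoli.isCompact_of_equicontinuous
  · have himage : ContinuousMap.toFun '' {f : C(X, Y) | LipschitzWith K f ∧ ∀ x, f x ∈ s} =
        {g | LipschitzWith K g} ∩ univ.pi fun _ => s := by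
      ext g
      refine ⟨?_, fun ⟨hg, hgs⟩ => ⟨⟨g, hg.continuous⟩, ⟨hg, fun x => hgs x trivial⟩, rfl⟩⟩
      rintro ⟨f, ⟨hf, hfs⟩, rfl⟩
      exact ⟨hf, fun x _ => hfs x⟩
    rw [himage]
    exact (isCompact_univ_pi fun _ => hs).inter_left (isClosed_setOfPred_lipschitzWith K)
  · exact (LipschitzWith.uniformEquicontinuous _ K fun f => f.2.1).equicontinuous

theorem eventually_natCast_ge (r : ℝ) : ∀ᶠ n : ℕ in atTop, r ≤ n :=
  tendsto_natCast_atTop_atTop.eventually_ge_atTop r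

theorem eventually_inv_natCast_add_one_le {ε : ℝ} (hε : 0 < ε) :
    ∀ᶠ n : ℕ in atTop, ((n : ℝ) + 1)⁻¹ ≤ ε := by
  simpa only [one_div] using tendsto_one_div_add_atTop_nhds_zero_nat.eventually (ge_mem_nhds hε)

theorem ne_of_inv_natCast_add_one_le_dist {X : Type*} [PseudoMetricSpace X] {x y : X} {n : ℕ}
    (h : ((n : ℝ) + 1)⁻¹ ≤ dist x y) : x ≠ y := by
  rintro rfl
  rw [dist_self] at h
  exact (inv_pos.2 n.cast_add_one_pos).not_ge h

section Trajectories

variable {E : Type*} [NormedAddCommGroup E] [NormedSpace ℝ E] {V : E → E} {γ : ℝ → E}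

def IsTrajectoryOf (V : E → E) (γ : ℝ → E) : Prop :=
  ∀ t : ℝ, HasDerivAt γ (V (γ t)) t

def IsClosedOrbitOf (V : E → E) (Γ : Set E) : Prop :=
  ∃ γ : ℝ → E, IsTrajectoryOf V γ ∧ (∃ T > (0 : ℝ), Periodic γ T) ∧ (∃ t, γ t ≠ γ 0) ∧
    Γ = range γ

theorem IsTrajectoryOf.continuous (h : IsTrajectoryOf V γ) : Continuous γ :=
  continuous_iff_continuousAt.2 fun t => (h t).continuousAt

theorem IsTrajectoryOf.comp_add_const (h : IsTrajectoryOf V γ) (c : ℝ) :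
    IsTrajectoryOf V (fun t => γ (t + c)) := fun t => by
  simpa using (h (t + c)).comp_add_const t c

theorem IsTrajectoryOf.lipschitzWith (h : IsTrajectoryOf V γ) {K : ℝ≥0}
    (hK : ∀ t, ‖V (γ t)‖₊ ≤ K) : LipschitzWith K γ :=
  lipschitzWith_of_nnnorm_deriv_le (fun t => (h t).differentiableAt) fun t => (h t).deriv ▸ hK t

theorem IsClosedOrbitOf.exists_trajectory_zero_eq {Γ : Set E} {x : E} (hΓ : IsClosedOrbitOf V Γ)
    (hx : x ∈ Γ) : ∃ γ : ℝ → E, IsTrajectoryOf V γ ∧ (∃ T > (0 : ℝ), Periodic γ T) ∧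
      (∃ t, γ t ≠ γ 0) ∧ Γ = range γ ∧ γ 0 = x := by
  obtain ⟨γ, hγ, ⟨T, hT, hper⟩, ⟨t, ht⟩, rfl⟩ := hΓ
  obtain ⟨c, rfl⟩ := hx
  refine ⟨fun s => γ (s + c), hγ.comp_add_const c, ⟨T, hT, hper.add_const c⟩, ?_,
    ((add_right_surjective c).range_comp γ).symm, by simp⟩
  by_contra! hconst
  exact ht (by simpa using (hconst (t - c)).trans (hconst (0 - c)).symm)

theorem isClosed_setOf_eq_add_integral (hV : Continuous V) :
    IsClosed {γ : C(ℝ, E) | ∀ t, γ t = γ 0 + ∫ u in (0 : ℝ)..t, V (γ u)} := by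
  simp only [ofPred_forall]
  refine isClosed_iInter fun t => isClosed_eq (by fun_prop) ?_
  exact (continuous_eval_const 0).add
    (intervalIntegral.continuous_parametric_intervalIntegral_of_continuous' (by fun_prop) 0 t)

/-- `(γ, T, t₁)` with `γ` a trajectory of period `T` and `γ t₁ ≠ γ 0`, all bounds quantified
by `n`. -/
def closedOrbitData (V : E → E) (n : ℕ) : Set (C(ℝ, E) × ℝ × ℝ) :=
  ({γ : C(ℝ, E) | LipschitzWith n γ ∧ ∀ t, γ t ∈ closedBall 0 n} ∩
      {γ | ∀ t, γ t = γ 0 + ∫ u in (0 : ℝ)..t, V (γ u)}) ×ˢ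
    Icc ((n + 1 : ℝ)⁻¹) n ×ˢ Icc (0 : ℝ) n ∩
    {p | Periodic p.1 p.2.1 ∧ (n + 1 : ℝ)⁻¹ ≤ dist (p.1 p.2.2) (p.1 0)}

theorem isCompact_closedOrbitData [ProperSpace E] (hV : Continuous V) (n : ℕ) :
    IsCompact (closedOrbitData V n) := by
  refine IsCompact.inter_right ?_ ?_
  · exact ((ContinuousMap.isCompact_setOf_lipschitzWith_mapsTo _
      (isCompact_closedBall _ _)).inter_right (isClosed_setOf_eq_add_integral hV)).prod
        (isCompact_Icc.prod isCompact_Icc)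
  · simp only [Periodic, ofPred_and, ofPred_forall]
    exact (isClosed_iInter fun t => isClosed_eq (by fun_prop) (by fun_prop)).inter
      (isClosed_le (by fun_prop) (by fun_prop))

variable {Y : Type*}

def twoClosedOrbitData (V : E → E) (f : E → Y) (n : ℕ) :
    Set ((C(ℝ, E) × ℝ × ℝ) × (C(ℝ, E) × ℝ × ℝ)) :=
  closedOrbitData V n ×ˢ closedOrbitData V n ∩
    {q | (∀ t, f (q.1.1 t) = f (q.1.1 0)) ∧ (∀ t, f (q.2.1 t) = f (q.1.1 0)) ∧
      ∀ t, (n + 1 : ℝ)⁻¹ ≤ dist (q.1.1 0) (q.2.1 t)}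

theorem isCompact_twoClosedOrbitData [ProperSpace E] [TopologicalSpace Y] [T2Space Y]
    (hV : Continuous V) {f : E → Y} (hf : Continuous f) (n : ℕ) :
    IsCompact (twoClosedOrbitData V f n) := by
  refine ((isCompact_closedOrbitData hV n).prod (isCompact_closedOrbitData hV n)).inter_right ?_
  simp only [ofPred_and, ofPred_forall]
  exact (isClosed_iInter fun t => isClosed_eq (by fun_prop) (by fun_prop)).inter
    ((isClosed_iInter fun t => isClosed_eq (by fun_prop) (by fun_prop)).inter
      (isClosed_iInter fun t => isClosed_le (by fun_prop) (by fun_prop)))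

theorem IsTrajectoryOf.eq_add_integral [CompleteSpace E] (hV : Continuous V)
    (h : IsTrajectoryOf V γ) (t : ℝ) : γ t = γ 0 + ∫ u in (0 : ℝ)..t, V (γ u) := by
  rw [intervalIntegral.integral_eq_sub_of_hasDerivAt (fun u _ => h u)
    ((hV.comp h.continuous).intervalIntegrable 0 t), add_sub_cancel]

theorem isTrajectoryOf_of_eq_add_integral [CompleteSpace E] (hV : Continuous V)
    (hγ : Continuous γ) (h : ∀ t, γ t = γ 0 + ∫ u in (0 : ℝ)..t, V (γ u)) : IsTrajectoryOf V γ := by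
  intro t
  have hVγ : Continuous fun u => V (γ u) := hV.comp hγ
  refine HasDerivAt.congr_of_eventuallyEq ?_ (Eventually.of_forall h)
  exact (intervalIntegral.integral_hasDerivAt_right (hVγ.intervalIntegrable 0 t)
    (hVγ.stronglyMeasurableAtFilter _ _) hVγ.continuousAt).const_add _

theorem isClosedOrbitOf_of_mem_closedOrbitData [CompleteSpace E] (hV : Continuous V) {n : ℕ}
    {p : C(ℝ, E) × ℝ × ℝ} (hp : p ∈ closedOrbitData V n) : IsClosedOrbitOf V (range p.1) := by
  obtain ⟨⟨⟨-, hint⟩, ⟨hT, -⟩, -⟩, hper, hsep⟩ := hp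
  exact ⟨p.1, isTrajectoryOf_of_eq_add_integral hV p.1.continuous hint,
    ⟨p.2.1, (inv_pos.2 n.cast_add_one_pos).trans_le hT, hper⟩,
    ⟨p.2.2, ne_of_inv_natCast_add_one_le_dist hsep⟩, rfl⟩

theorem IsTrajectoryOf.eventually_exists_mem_closedOrbitData [CompleteSpace E]
    (hV : Continuous V) (hγ : IsTrajectoryOf V γ) {T : ℝ} (hT : 0 < T) (hper : Periodic γ T)
    (hnc : ∃ t, γ t ≠ γ 0) :
    ∀ᶠ n : ℕ in atTop, ∃ T' t₁ : ℝ, (⟨γ, hγ.continuous⟩, T', t₁) ∈ closedOrbitData V n := by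
  have hrange : IsCompact (range γ) := hper.compact_of_continuous hT.ne' hγ.continuous
  obtain ⟨R, hR⟩ := hrange.isBounded.subset_closedBall 0
  obtain ⟨C, hC⟩ := (hrange.image hV).isBounded.exists_norm_le
  obtain ⟨t, ht⟩ := hnc
  obtain ⟨t₁, ht₁, hγt⟩ := hper.exists_mem_Ico₀ hT t
  have hd : 0 < dist (γ t₁) (γ 0) := dist_pos.2 (hγt ▸ ht)
  filter_upwards [eventually_natCast_ge R, eventually_natCast_ge C, eventually_natCast_ge T,
    eventually_inv_natCast_add_one_le hT, eventually_inv_natCast_add_one_le hd]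
    with n hRn hCn hTn hTn' hdn
  refine ⟨T, t₁, ⟨⟨⟨hγ.lipschitzWith fun u => ?_, fun u => ?_⟩, hγ.eq_add_integral hV⟩,
    ⟨hTn', hTn⟩, ht₁.1, ht₁.2.le.trans hTn⟩, hper, hdn⟩
  · rw [← NNReal.coe_le_coe, coe_nnnorm, NNReal.coe_natCast]
    exact (hC _ (mem_image_of_mem V (mem_range_self u))).trans hCn
  · exact closedBall_subset_closedBall hRn (hR (mem_range_self u))

def levelsWithTwoClosedOrbits (V : E → E) (f : E → Y) : Set Y :=
  {y | ∃ Γ₁ Γ₂, IsClosedOrbitOf V Γ₁ ∧ Γ₁ ⊆ f ⁻¹' {y} ∧ IsClosedOrbitOf V Γ₂ ∧ Γ₂ ⊆ f ⁻¹' {y} ∧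
    Γ₁ ≠ Γ₂}

theorem exists_mem_twoClosedOrbitData_of_mem_diff [CompleteSpace E] (hV : Continuous V)
    {f : E → Y} {y : Y} {Γ₁ Γ₂ : Set E} (h₁ : IsClosedOrbitOf V Γ₁) (hΓ₁ : Γ₁ ⊆ f ⁻¹' {y})
    (h₂ : IsClosedOrbitOf V Γ₂) (hΓ₂ : Γ₂ ⊆ f ⁻¹' {y}) {x : E} (hx : x ∈ Γ₁ \ Γ₂) :
    ∃ n, ∃ q ∈ twoClosedOrbitData V f n, f (q.1.1 0) = y := by
  obtain ⟨γ, hγ, ⟨T, hT, hTper⟩, hγnc, rfl, rfl⟩ := h₁.exists_trajectory_zero_eq hx.1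
  obtain ⟨δ, hδ, ⟨S, hS, hSper⟩, hδnc, rfl⟩ := h₂
  have hsep : 0 < infDist (γ 0) (range δ) :=
    ((hSper.compact_of_continuous hS.ne' hδ.continuous).isClosed.notMem_iff_infDist_pos
      (range_nonempty δ)).1 hx.2
  obtain ⟨n, ⟨T', t₁, hγn⟩, ⟨S', s₁, hδn⟩, hsepn⟩ :=
    ((hγ.eventually_exists_mem_closedOrbitData hV hT hTper hγnc).and
      ((hδ.eventually_exists_mem_closedOrbitData hV hS hSper hδnc).and
        (eventually_inv_natCast_add_one_le hsep))).exists
  have hlevel₀ : f (γ 0) = y := hΓ₁ (mem_range_self 0)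
  refine ⟨n, ((_, T', t₁), (_, S', s₁)), ⟨⟨hγn, hδn⟩, fun t => ?_, fun t => ?_,
    fun t => hsepn.trans (infDist_le_dist_of_mem (mem_range_self t))⟩, hlevel₀⟩
  · exact (hΓ₁ (mem_range_self t)).trans hlevel₀.symm
  · exact (hΓ₂ (mem_range_self t)).trans hlevel₀.symm

theorem levelsWithTwoClosedOrbits_eq_iUnion [CompleteSpace E] (hV : Continuous V) (f : E → Y) :
    levelsWithTwoClosedOrbits V f = ⋃ n, (fun q => f (q.1.1 0)) '' twoClosedOrbitData V f n := by
  ext y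
  simp only [levelsWithTwoClosedOrbits, mem_ofPred_eq, mem_iUnion, mem_image]
  constructor
  · rintro ⟨Γ₁, Γ₂, h₁, hΓ₁, h₂, hΓ₂, hne⟩
    by_cases h₁₂ : Γ₁ ⊆ Γ₂
    · obtain ⟨x, hx⟩ := sdiff_nonempty.2 fun h₂₁ => hne (h₁₂.antisymm h₂₁)
      exact exists_mem_twoClosedOrbitData_of_mem_diff hV h₂ hΓ₂ h₁ hΓ₁ hx
    · obtain ⟨x, hx⟩ := sdiff_nonempty.2 h₁₂
      exact exists_mem_twoClosedOrbitData_of_mem_diff hV h₁ hΓ₁ h₂ hΓ₂ hx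
  · rintro ⟨n, q, ⟨⟨hγ, hδ⟩, hγf, hδf, hsep⟩, rfl⟩
    refine ⟨range q.1.1, range q.2.1, isClosedOrbitOf_of_mem_closedOrbitData hV hγ,
      range_subset_iff.2 hγf, isClosedOrbitOf_of_mem_closedOrbitData hV hδ,
      range_subset_iff.2 hδf, fun h => ?_⟩
    obtain ⟨t, ht⟩ : q.1.1 0 ∈ range q.2.1 := h ▸ mem_range_self 0
    exact ne_of_inv_natCast_add_one_le_dist (hsep t) ht.symm

theorem isSigmaCompact_levelsWithTwoClosedOrbits [ProperSpace E] [TopologicalSpace Y]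
    [T2Space Y] (hV : Continuous V) {f : E → Y} (hf : Continuous f) :
    IsSigmaCompact (levelsWithTwoClosedOrbits V f) := by
  rw [levelsWithTwoClosedOrbits_eq_iUnion hV]
  exact isSigmaCompact_iUnion_of_isCompact _ fun n =>
    (isCompact_twoClosedOrbitData hV hf n).image (by fun_prop)

end Trajectories

theorem continuous_hamVF {H : (Fin 4 → ℝ) → ℝ} (hH : ContDiff ℝ 1 H) : Continuous (hamVF H) := by
  have hpartial (v : Fin 4 → ℝ) : Continuous fun x => fderiv ℝ H x v :=
    (hH.continuous_fderiv one_ne_zero).clm_apply continuous_const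
  refine continuous_pi fun i => ?_
  fin_cases i <;> simp only [hamVF] <;> fun_prop

theorem isClosedOrbit_iff_isClosedOrbitOf_hamVF {H : (Fin 4 → ℝ) → ℝ} {Γ : Set (Fin 4 → ℝ)} :
    IsClosedOrbit H Γ ↔ IsClosedOrbitOf (hamVF H) Γ :=
  Iff.rfl

theorem at_most_one_closed_orbit_is_measurable_general
    (H : (Fin 4 → ℝ) → ℝ) (hH : ContDiff ℝ (⊤ : ℕ∞) H)
    (a b : ℝ) :
    NullMeasurableSet
      {s ∈ Set.Ioo a b | ∀ Γ₁ Γ₂ : Set (Fin 4 → ℝ),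
        IsClosedOrbit H Γ₁ → Γ₁ ⊆ H ⁻¹' {s} →
        IsClosedOrbit H Γ₂ → Γ₂ ⊆ H ⁻¹' {s} → Γ₁ = Γ₂}
      volume := by
  have hB : MeasurableSet (levelsWithTwoClosedOrbits (hamVF H) H) :=
    (isSigmaCompact_levelsWithTwoClosedOrbits
      (continuous_hamVF (hH.of_le (by exact_mod_cast le_top))) hH.continuous).measurableSet
  have hset : {s ∈ Set.Ioo a b | ∀ Γ₁ Γ₂ : Set (Fin 4 → ℝ),
      IsClosedOrbit H Γ₁ → Γ₁ ⊆ H ⁻¹' {s} → IsClosedOrbit H Γ₂ → Γ₂ ⊆ H ⁻¹' {s} → Γ₁ = Γ₂} =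
      Ioo a b \ levelsWithTwoClosedOrbits (hamVF H) H := by
    ext s
    simp only [Set.mem_sdiff, levelsWithTwoClosedOrbits, mem_ofPred_eq,
      isClosedOrbit_iff_isClosedOrbitOf_hamVF, not_exists, not_and, not_not]
  rw [hset]
  exact (measurableSet_Ioo.diff hB).nullMeasurableSet

theorem at_most_one_closed_orbit_is_measurable
    (H : (Fin 4 → ℝ) → ℝ) (hH : ContDiff ℝ (⊤ : ℕ∞) H)
    (a b : ℝ) (hI : Set.Ioo a b ⊆ Rc H) :
    NullMeasurableSet
      {s ∈ Set.Ioo a b | ∀ Γ₁ Γ₂ : Set (Fin 4 → ℝ),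
        IsClosedOrbit H Γ₁ → Γ₁ ⊆ H ⁻¹' {s} →
        IsClosedOrbit H Γ₂ → Γ₂ ⊆ H ⁻¹' {s} → Γ₁ = Γ₂}
      volume :=
  at_most_one_closed_orbit_is_measurable_general H hH a b
end
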